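/- Let p ∈ (1,2) and a > 0, and let f = f(·,a) be the unique solution of (|f'|^{p-2} f')' + f - |f'|^{p-1} = 0 on (0,∞) with f(0) = a, f'(0) = 0. Set R(a) := inf{r > 0 : f(r) = 0} ∈ (0,∞]. Then R(a) > 0 and, for every r ∈ (0,R(a)), one has 0 < f(r) < a and -(a(1-e^{-r}))^{1/(p-1)} < f'(r) < 0. -/

import Mathlib

open Set Filter Topology

/-- The extinction "radius" `R = inf{r > 0 : f(r) = 0}`, as an extended real number
(`⊤` when `f` does not vanish on `(0,∞)`). -/
noncomputable def extTime (f : ℝ → ℝ) : EReal :=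
  sInf {x : EReal | ∃ r : ℝ, 0 < r ∧ f r = 0 ∧ x = (r : EReal)}

/-- `f` solves `(|f'|^{p-2} f')' + f - |f'|^{p-1} = 0` on `(0,∞)` with `f(0)=a`, `f'(0)=0`;
`fd` is the derivative of `f` and `gd` the derivative of `|f'|^{p-2} f'`, both continuous
on `[0,∞)`, so that `f ∈ C¹([0,∞))` and `|f'|^{p-2} f' ∈ C¹([0,∞))`. -/
def IsSol (p a : ℝ) (f fd gd : ℝ → ℝ) : Prop :=
  (∀ r ∈ Set.Ici (0:ℝ), HasDerivWithinAt f (fd r) (Set.Ici 0) r) ∧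
  ContinuousOn fd (Set.Ici 0) ∧
  (∀ r ∈ Set.Ici (0:ℝ), HasDerivWithinAt (fun s => |fd s| ^ (p-2) * fd s) (gd r) (Set.Ici 0) r) ∧
  ContinuousOn gd (Set.Ici 0) ∧
  (∀ r ∈ Set.Ioi (0:ℝ), gd r + f r - |fd r| ^ (p-1) = 0) ∧
  f 0 = a ∧ fd 0 = 0

open Real

/-! Write `g = |f'|^{p-2} f'`, so that the equation reads `g' = |g| - f` and `|g| = |f'|^{p-1}`.
While `f > 0`, `g` cannot cross `0` upwards since `g' = -f < 0` wherever `g = 0`; so `g ≤ 0`, and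
then `(eᵗ g)' = -eᵗ f < 0` gives `g < 0`, i.e. `f' < 0` and `f < a`, while
`(eᵗ (g + a))' = eᵗ (a - f) > 0` gives `g > -a (1 - e⁻ᵗ)`, which is the bound on `f'`. -/

lemma abs_abs_rpow_sub_two_mul_self {p : ℝ} (hp : p ≠ 1) (x : ℝ) :
    |(|x| ^ (p - 2) * x)| = |x| ^ (p - 1) := by
  rcases eq_or_ne x 0 with rfl | hx
  · simp [zero_rpow (sub_ne_zero.mpr hp)]
  · rw [abs_mul, abs_of_nonneg (rpow_nonneg (abs_nonneg x) _),
      ← rpow_add_one (abs_ne_zero.mpr hx)]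
    ring_nf

lemma neg_of_abs_rpow_mul_neg {q x : ℝ} (h : |x| ^ q * x < 0) : x < 0 := by
  by_contra! hx
  exact h.not_ge (mul_nonneg (rpow_nonneg (abs_nonneg x) q) hx)

lemma abs_rpow_sub_two_mul_self_of_neg {p x : ℝ} (hp : p ≠ 1) (hx : x < 0) :
    |x| ^ (p - 2) * x = -|x| ^ (p - 1) := by
  have hneg : |x| ^ (p - 2) * x < 0 :=
    mul_neg_of_pos_of_neg (rpow_pos_of_pos (abs_pos.mpr hx.ne) _) hx
  rw [← abs_abs_rpow_sub_two_mul_self hp, abs_of_neg hneg, neg_neg]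

lemma neg_rpow_one_div_lt_of_neg_lt_abs_rpow_mul {p A x : ℝ} (hp : 1 < p) (hx : x < 0)
    (h : -A < |x| ^ (p - 2) * x) : -A ^ (1 / (p - 1)) < x := by
  rw [abs_rpow_sub_two_mul_self_of_neg hp.ne' hx, neg_lt_neg_iff] at h
  have hA : 0 ≤ A := (rpow_nonneg (abs_nonneg x) _).trans h.le
  have : |x| < A ^ (1 / (p - 1)) := by
    rwa [one_div, lt_rpow_inv_iff_of_pos (abs_nonneg x) hA (sub_pos.mpr hp)]
  linarith [neg_abs_le x, abs_of_neg hx]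

lemma exp_mul_lt_of_deriv_add_neg {y y' : ℝ → ℝ} {a b : ℝ} (hy : ContinuousOn y (Icc a b))
    (hy' : ∀ t ∈ Ioo a b, HasDerivAt y (y' t) t) (h : ∀ t ∈ Ioo a b, y' t + y t < 0)
    {s : ℝ} (hs : s ∈ Ioc a b) : exp s * y s < exp a * y a := by
  have hanti : StrictAntiOn (fun t => exp t * y t) (Icc a b) := by
    refine strictAntiOn_of_hasDerivWithinAt_neg (f' := fun t => exp t * y t + exp t * y' t)
      (convex_Icc a b) (continuous_exp.continuousOn.mul hy) (fun t ht => ?_) (fun t ht => ?_)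
    · rw [interior_Icc] at ht
      exact ((hasDerivAt_exp t).mul (hy' t ht)).hasDerivWithinAt
    · rw [interior_Icc] at ht
      rw [← mul_add, add_comm]
      exact mul_neg_of_pos_of_neg (exp_pos t) (h t ht)
  exact hanti (left_mem_Icc.mpr (hs.1.le.trans hs.2)) ⟨hs.1.le, hs.2⟩ hs.1

lemma pos_on_Icc_of_ne_zero {f : ℝ → ℝ} {a b : ℝ} (hf : ContinuousOn f (Icc a b))
    (ha : 0 < f a) (hne : ∀ s ∈ Ioc a b, f s ≠ 0) : ∀ s ∈ Icc a b, 0 < f s := by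
  intro s hs
  by_contra! hfs
  obtain ⟨t, ht, hft⟩ := isPreconnected_Icc.intermediate_value hs
    (left_mem_Icc.mpr (hs.1.trans hs.2)) hf ⟨hfs, ha.le⟩
  rcases ht.1.eq_or_lt with rfl | hat
  · exact ha.ne' hft
  · exact hne t ⟨hat, ht.2⟩ hft

lemma le_extTime {f : ℝ → ℝ} {ε : ℝ} (h : ∀ s ∈ Ioc 0 ε, f s ≠ 0) :
    (ε : EReal) ≤ extTime f := by
  refine le_sInf ?_
  rintro _ ⟨s, hs, hfs, rfl⟩
  by_contra! hsε
  exact h s ⟨hs, by exact_mod_cast hsε.le⟩ hfs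

lemma ne_zero_of_lt_extTime {f : ℝ → ℝ} {s : ℝ} (hs : 0 < s) (h : (s : EReal) < extTime f) :
    f s ≠ 0 :=
  fun hfs => (sInf_le ⟨s, hs, hfs, rfl⟩ : extTime f ≤ s).not_gt h

noncomputable def flux (p : ℝ) (fd : ℝ → ℝ) (s : ℝ) : ℝ := |fd s| ^ (p - 2) * fd s

namespace IsSol

variable {p a : ℝ} {f fd gd : ℝ → ℝ}

lemma apply_zero (hf : IsSol p a f fd gd) : f 0 = a := hf.2.2.2.2.2.1

lemma flux_zero (hf : IsSol p a f fd gd) : flux p fd 0 = 0 := by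
  simp [flux, hf.2.2.2.2.2.2]

lemma continuousOn (hf : IsSol p a f fd gd) : ContinuousOn f (Ici 0) :=
  fun s hs => (hf.1 s hs).continuousWithinAt

lemma continuousOn_flux (hf : IsSol p a f fd gd) : ContinuousOn (flux p fd) (Ici 0) :=
  fun s hs => (hf.2.2.1 s hs).continuousWithinAt

lemma hasDerivAt (hf : IsSol p a f fd gd) {s : ℝ} (hs : 0 < s) : HasDerivAt f (fd s) s :=
  (hf.1 s hs.le).hasDerivAt (Ici_mem_nhds hs)

lemma hasDerivAt_flux (hf : IsSol p a f fd gd) {s : ℝ} (hs : 0 < s) :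
    HasDerivAt (flux p fd) (gd s) s :=
  (hf.2.2.1 s hs.le).hasDerivAt (Ici_mem_nhds hs)

lemma hasDerivWithinAt_flux_Ici (hf : IsSol p a f fd gd) {s : ℝ} (hs : 0 ≤ s) :
    HasDerivWithinAt (flux p fd) (gd s) (Ici s) s :=
  (hf.2.2.1 s hs).mono (Ici_subset_Ici.mpr hs)

/-- The equation is only assumed on `(0,∞)`; continuity extends it to `s = 0`. -/
lemma deriv_flux_eq (hf : IsSol p a f fd gd) (hp : 1 < p) {s : ℝ} (hs : 0 ≤ s) :
    gd s = |flux p fd s| - f s := by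
  have hode : EqOn gd (fun s => |fd s| ^ (p - 1) - f s) (Ici 0) := by
    refine EqOn.of_subset_closure (fun s hs => ?_) hf.2.2.2.1 ?_ Ioi_subset_Ici_self
      (closure_Ioi (0 : ℝ)).ge
    · linarith [hf.2.2.2.2.1 s hs]
    · exact (hf.2.1.abs.rpow_const fun _ _ => Or.inr (by linarith)).sub hf.continuousOn
  rw [hode hs, flux, abs_abs_rpow_sub_two_mul_self hp.ne']

section PositiveSolution

variable {r : ℝ}

lemma flux_nonpos (hf : IsSol p a f fd gd) (hp : 1 < p) (hpos : ∀ s ∈ Icc 0 r, 0 < f s) :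
    ∀ s ∈ Icc 0 r, flux p fd s ≤ 0 := by
  refine image_le_of_deriv_right_lt_deriv_boundary' (B' := fun _ => 0)
    (hf.continuousOn_flux.mono Icc_subset_Ici_self) (fun s hs => hf.hasDerivWithinAt_flux_Ici hs.1)
    hf.flux_zero.le continuousOn_const (fun _ _ => hasDerivWithinAt_const _ _ _) ?_
  intro s hs hs0
  rw [hf.deriv_flux_eq hp hs.1, hs0, abs_zero, zero_sub, neg_neg_iff_pos]
  exact hpos s (Ico_subset_Icc_self hs)

lemma flux_neg (hf : IsSol p a f fd gd) (hp : 1 < p) (hpos : ∀ s ∈ Icc 0 r, 0 < f s)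
    {s : ℝ} (hs : s ∈ Ioc 0 r) : flux p fd s < 0 := by
  have key := exp_mul_lt_of_deriv_add_neg (hf.continuousOn_flux.mono Icc_subset_Ici_self)
    (fun t ht => hf.hasDerivAt_flux ht.1) (fun t ht => ?_) hs
  · rw [hf.flux_zero, mul_zero] at key
    exact neg_of_mul_neg_right key (exp_pos s).le
  · rw [hf.deriv_flux_eq hp ht.1.le,
      abs_of_nonpos (hf.flux_nonpos hp hpos t (Ioo_subset_Icc_self ht))]
    linarith [hpos t (Ioo_subset_Icc_self ht)]

lemma fd_neg (hf : IsSol p a f fd gd) (hp : 1 < p) (hpos : ∀ s ∈ Icc 0 r, 0 < f s)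
    {s : ℝ} (hs : s ∈ Ioc 0 r) : fd s < 0 :=
  neg_of_abs_rpow_mul_neg (hf.flux_neg hp hpos hs)

lemma apply_lt (hf : IsSol p a f fd gd) (hp : 1 < p) (hpos : ∀ s ∈ Icc 0 r, 0 < f s)
    {s : ℝ} (hs : s ∈ Ioc 0 r) : f s < a := by
  have hanti : StrictAntiOn f (Icc 0 r) := by
    refine strictAntiOn_of_hasDerivWithinAt_neg (f' := fd) (convex_Icc 0 r)
      (hf.continuousOn.mono Icc_subset_Ici_self) (fun t ht => ?_) (fun t ht => ?_)
    · rw [interior_Icc] at ht ⊢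
      exact (hf.hasDerivAt ht.1).hasDerivWithinAt
    · rw [interior_Icc] at ht
      exact hf.fd_neg hp hpos (Ioo_subset_Ioc_self ht)
  simpa [hf.apply_zero] using
    hanti (left_mem_Icc.mpr (hs.1.le.trans hs.2)) (Ioc_subset_Icc_self hs) hs.1

lemma neg_lt_flux (hf : IsSol p a f fd gd) (hp : 1 < p) (hpos : ∀ s ∈ Icc 0 r, 0 < f s)
    {s : ℝ} (hs : s ∈ Ioc 0 r) : -(a * (1 - exp (-s))) < flux p fd s := by
  have key := exp_mul_lt_of_deriv_add_neg (y := fun t => -(flux p fd t + a))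
    ((hf.continuousOn_flux.mono Icc_subset_Ici_self).add continuousOn_const).neg
    (fun t ht => ((hf.hasDerivAt_flux ht.1).add_const a).neg) (fun t ht => ?_) hs
  · rw [hf.flux_zero, exp_zero, zero_add, one_mul] at key
    have hexp : exp (-s) * exp s = 1 := by rw [← exp_add, neg_add_cancel, exp_zero]
    have := mul_lt_mul_of_pos_left key (exp_pos (-s))
    rw [← mul_assoc, hexp, one_mul] at this
    linarith
  · have ht' := Ioo_subset_Icc_self ht
    rw [hf.deriv_flux_eq hp ht.1.le, abs_of_nonpos (hf.flux_nonpos hp hpos t ht')]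
    linarith [hf.apply_lt hp hpos (Ioo_subset_Ioc_self ht)]

end PositiveSolution

lemma extTime_pos (hf : IsSol p a f fd gd) (ha : 0 < a) : 0 < extTime f := by
  have hev : ∀ᶠ s in 𝓝[≥] 0, 0 < f s :=
    (hf.continuousOn 0 self_mem_Ici).eventually_const_lt (hf.apply_zero ▸ ha)
  obtain ⟨ε, hε, hsub⟩ := mem_nhdsGE_iff_exists_Icc_subset.mp hev
  exact (le_extTime fun s hs => (hsub ⟨hs.1.le, hs.2⟩).ne').trans_lt' (EReal.coe_pos.mpr hε)

lemma pos_of_lt_extTime (hf : IsSol p a f fd gd) (ha : 0 < a) {r : ℝ}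
    (hr : (r : EReal) < extTime f) : ∀ s ∈ Icc 0 r, 0 < f s :=
  pos_on_Icc_of_ne_zero (hf.continuousOn.mono Icc_subset_Ici_self) (hf.apply_zero ▸ ha)
    fun _ hs => ne_zero_of_lt_extTime hs.1 ((EReal.coe_le_coe_iff.mpr hs.2).trans_lt hr)

end IsSol

/-- For the solution `f(·,a)`, one has `R(a) > 0` and, for every
`r ∈ (0,R(a))`, `0 < f(r) < a` and `-(a(1-e^{-r}))^{1/(p-1)} < f'(r) < 0`. -/
theorem stmt1 (p a : ℝ) (hp : p ∈ Set.Ioo (1:ℝ) 2) (ha : 0 < a)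
    (f fd gd : ℝ → ℝ) (hf : IsSol p a f fd gd) :
    0 < extTime f ∧
    ∀ r : ℝ, 0 < r → (r : EReal) < extTime f →
      0 < f r ∧ f r < a ∧
      -((a * (1 - Real.exp (-r))) ^ (1/(p-1))) < fd r ∧ fd r < 0 := by
  refine ⟨hf.extTime_pos ha, fun r hr hrR => ?_⟩
  have hpos := hf.pos_of_lt_extTime ha hrR
  have hr' : r ∈ Ioc 0 r := right_mem_Ioc.mpr hr
  have hfd := hf.fd_neg hp.1 hpos hr'
  exact ⟨hpos r (Ioc_subset_Icc_self hr'), hf.apply_lt hp.1 hpos hr',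
    neg_rpow_one_div_lt_of_neg_lt_abs_rpow_mul hp.1 hfd (hf.neg_lt_flux hp.1 hpos hr'), hfd⟩
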